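/- arXiv:1710.09676 — 8 statements merged into one kernel-verified Lean document; each statement's English description precedes it below -/
import Mathlib

section
/- Let T be an n×n positive semidefinite matrix and L_i = a⁻¹ e_i e_iᵀ with a > 0, where e_i is the i-th standard basis vector. If M and M + L_j are invertible and positive definite with M ⪰ 0, then det(M + L_i)·det(M + L_j) ≥ det(M)·det(M + L_i + L_j). -/
/-!
Factor `s • E_ii + t • E_jj` as a product through `Fin 2`; the generalized matrix determinant
lemma then expresses every determinant in the inequality through `det M` and the entries of
`M⁻¹`. The difference of the two sides comes out as `t² (det M)² (M⁻¹)ᵢⱼ (M⁻¹)ⱼᵢ`, a square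
because `M⁻¹` is symmetric.
-/

open Matrix

section RankTwoUpdate

variable {m α : Type*} [Fintype m] [DecidableEq m] [CommRing α]

theorem det_add_smul_single_add_smul_single {A : Matrix m m α} (hA : IsUnit A.det)
    (s t : α) (i j : m) :
    (A + s • single i i 1 + t • single j j 1).det =
      A.det * ((1 + s * A⁻¹ i i) * (1 + t * A⁻¹ j j) - s * t * A⁻¹ i j * A⁻¹ j i) := by
  have hUV : s • single i i (1 : α) + t • single j j 1 =
      (single i (0 : Fin 2) s + single j 1 t) *
        (single (0 : Fin 2) i (1 : α) + single 1 j 1) := by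
    simp [Matrix.add_mul, Matrix.mul_add, Matrix.smul_single]
  rw [add_assoc, hUV, det_add_mul _ _ hA, det_fin_two]
  simp only [Matrix.add_mul, Matrix.mul_add, single_mul_mul_single, Matrix.add_apply,
    single_apply_same, single_apply_of_ne, one_apply_eq, one_apply_ne, ne_eq, zero_ne_one,
    one_ne_zero, not_false_eq_true, and_true, and_false, and_self, one_mul, add_zero, zero_add]
  ring

theorem det_add_smul_single {A : Matrix m m α} (hA : IsUnit A.det) (s : α) (i : m) :
    (A + s • single i i 1).det = A.det * (1 + s * A⁻¹ i i) := by
  simpa using det_add_smul_single_add_smul_single hA s 0 i i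

theorem det_add_smul_single_mul_sub_det_mul_det_add {A : Matrix m m α} (hA : IsUnit A.det)
    (s t : α) (i j : m) :
    (A + t • single j j 1).det * (A + s • single i i 1).det -
        A.det * (A + s • single i i 1 + t • single j j 1).det =
      s * t * A.det ^ 2 * A⁻¹ i j * A⁻¹ j i := by
  rw [det_add_smul_single hA, det_add_smul_single hA, det_add_smul_single_add_smul_single hA]
  ring

end RankTwoUpdate

theorem det_rank_one_update_ineq_general {n : ℕ} (M : Matrix (Fin n) (Fin n) ℝ) (a : ℝ)
    (i j : Fin n) (hM : M.PosDef) :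
    (M + a⁻¹ • Matrix.single j j (1 : ℝ)).det *
      (M + a⁻¹ • Matrix.single i i (1 : ℝ)).det ≥
    M.det *
      (M + a⁻¹ • Matrix.single i i (1 : ℝ) + a⁻¹ • Matrix.single j j (1 : ℝ)).det := by
  have hsymm : M⁻¹ j i = M⁻¹ i j := hM.inv.isHermitian.apply i j
  rw [ge_iff_le, ← sub_nonneg]
  calc 0 ≤ (a⁻¹ * M.det * M⁻¹ i j) ^ 2 := sq_nonneg _
    _ = _ := by
      rw [det_add_smul_single_mul_sub_det_mul_det_add hM.det_pos.ne'.isUnit, hsymm]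
      ring

theorem det_rank_one_update_ineq {n : ℕ} (M : Matrix (Fin n) (Fin n) ℝ) (a : ℝ) (ha : 0 < a)
    (i j : Fin n) (hM : M.PosDef)
    (hMj : (M + a⁻¹ • Matrix.single j j (1 : ℝ)).PosDef) :
    (M + a⁻¹ • Matrix.single j j (1 : ℝ)).det *
      (M + a⁻¹ • Matrix.single i i (1 : ℝ)).det ≥
    M.det *
      (M + a⁻¹ • Matrix.single i i (1 : ℝ) + a⁻¹ • Matrix.single j j (1 : ℝ)).det :=
  det_rank_one_update_ineq_general M a i j hM
end

section
/- For a finite ground set V, the set function f(A) = log det(T + a⁻¹ E_A), where T is positive definite, a > 0, and E_A is the diagonal matrix extended by zeros (i.e., the (n+1)×(n+1) matrix with a⁻¹ diag(1_A) in the top-left n×n block and zeros elsewhere), is submodular: for all A ⊆ B ⊂ V and v ∉ B, f(A ∪ {v}) − f(A) ≥ f(B ∪ {v}) − f(B). -/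
/-!
Write `M X = T + a⁻¹ E_X`. By the matrix determinant lemma the marginal gain of `v` at `X` is
`log (1 + a⁻¹ (M X)⁻¹ v v)`. For `A ⊆ B` the difference `M B - M A` is positive semidefinite, and
inversion reverses the Loewner order on positive definite matrices, because
`xᵀ P⁻¹ x = max_y (2 yᵀ x - yᵀ P y)` is antitone in `P`. Hence the gain at `B` is at most the gain
at `A`.
-/
open Matrix

/-- The `(n+1)×(n+1)` diagonal 0/1 indicator matrix of `A ⊆ {1,…,n}` extended by a zero row/column. -/
def extIndicator {n : ℕ} (A : Finset (Fin n)) : Matrix (Fin (n + 1)) (Fin (n + 1)) ℝ :=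
  Matrix.diagonal (fun i => if i ∈ A.image Fin.castSucc then (1 : ℝ) else 0)

namespace Matrix

variable {m : Type*} [Fintype m] [DecidableEq m]

theorem det_add_single {R : Type*} [CommRing R] {A : Matrix m m R} (hA : IsUnit A.det)
    (i j : m) (c : R) : (A + single i j c).det = A.det * (1 + c * A⁻¹ j i) := by
  have hsingle : single i j c = vecMulVec (Pi.single i c) (Pi.single j 1) := by
    ext k l
    simp only [single_apply, vecMulVec_apply, Pi.single_apply, mul_ite, mul_one, mul_zero,
      ite_and]
    split_ifs <;> simp_all
  rw [hsingle, vecMulVec_eq Unit, det_add_replicateCol_mul_replicateRow hA,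
    det_unique (n := Unit)]
  simp [mul_apply, Pi.single_apply, mul_comm]

namespace PosDef

theorem log_det_add_single_sub_log_det {M : Matrix m m ℝ} (hM : M.PosDef) (w : m) {c : ℝ}
    (hc : 0 ≤ c) :
    Real.log (M + single w w c).det - Real.log M.det = Real.log (1 + c * M⁻¹ w w) := by
  have hMw : 0 < M⁻¹ w w := hM.inv.diag_pos
  rw [det_add_single hM.det_pos.ne'.isUnit w w c, Real.log_mul hM.det_pos.ne' (by positivity),
    add_sub_cancel_left]

/-- Completing the square: the difference of the two sides is
`(y - P⁻¹ x) ⬝ᵥ P *ᵥ (y - P⁻¹ x)`. -/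
theorem two_mul_dotProduct_sub_le {P : Matrix m m ℝ} (hP : P.PosDef) (x y : m → ℝ) :
    2 * (y ⬝ᵥ x) - y ⬝ᵥ P *ᵥ y ≤ x ⬝ᵥ P⁻¹ *ᵥ x := by
  set p := P⁻¹ *ᵥ x
  have hPp : P *ᵥ p = x := by
    rw [mulVec_mulVec, mul_nonsing_inv _ hP.det_pos.ne'.isUnit, one_mulVec]
  have hPT : Pᵀ = P := hP.isHermitian
  have hsymm : ∀ u, p ⬝ᵥ P *ᵥ u = u ⬝ᵥ x := fun u => by
    rw [dotProduct_mulVec, ← mulVec_transpose, hPT, hPp, dotProduct_comm]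
  have hsq := hP.posSemidef.dotProduct_mulVec_nonneg (y - p)
  simp only [star_trivial, mulVec_sub, dotProduct_sub, sub_dotProduct, hPp, hsymm] at hsq
  rw [dotProduct_comm x]
  linarith

theorem dotProduct_inv_mulVec_le {P Q : Matrix m m ℝ} (hP : P.PosDef)
    (hPQ : (Q - P).PosSemidef) (x : m → ℝ) : x ⬝ᵥ Q⁻¹ *ᵥ x ≤ x ⬝ᵥ P⁻¹ *ᵥ x := by
  have hQ : Q.PosDef := by simpa using hP.add_posSemidef hPQ
  set y := Q⁻¹ *ᵥ x
  have hQy : Q *ᵥ y = x := by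
    rw [mulVec_mulVec, mul_nonsing_inv _ hQ.det_pos.ne'.isUnit, one_mulVec]
  have hgap : 0 ≤ y ⬝ᵥ (Q - P) *ᵥ y := by simpa using hPQ.dotProduct_mulVec_nonneg y
  rw [sub_mulVec, dotProduct_sub, hQy] at hgap
  have := hP.two_mul_dotProduct_sub_le x y
  rw [dotProduct_comm x]
  linarith

theorem inv_apply_le {P Q : Matrix m m ℝ} (hP : P.PosDef) (hPQ : (Q - P).PosSemidef) (w : m) :
    Q⁻¹ w w ≤ P⁻¹ w w := by
  simpa [mulVec_single_one, single_dotProduct] using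
    hP.dotProduct_inv_mulVec_le hPQ (Pi.single w 1)

end PosDef

end Matrix

section ExtIndicator

variable {n : ℕ}

theorem extIndicator_posSemidef (A : Finset (Fin n)) : (extIndicator A).PosSemidef :=
  posSemidef_diagonal_iff.mpr fun i => by split_ifs <;> norm_num

theorem extIndicator_sub_posSemidef {A B : Finset (Fin n)} (hAB : A ⊆ B) :
    (extIndicator B - extIndicator A).PosSemidef := by
  rw [extIndicator, extIndicator, diagonal_sub]
  refine posSemidef_diagonal_iff.mpr fun i => ?_
  have him := Finset.image_subset_image (f := Fin.castSucc) hAB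
  split_ifs with hB hA hA
  all_goals first | exact absurd (him hA) hB | norm_num

theorem extIndicator_insert {A : Finset (Fin n)} {v : Fin n} (hv : v ∉ A) :
    extIndicator (insert v A) = extIndicator A + single v.castSucc v.castSucc 1 := by
  rw [extIndicator, extIndicator, ← diagonal_single, diagonal_add]
  congr 1
  funext i
  simp only [Finset.image_insert, Finset.mem_insert, Pi.single_apply]
  split_ifs <;> simp_all

end ExtIndicator

theorem logdet_submodular {n : ℕ} (T : Matrix (Fin (n + 1)) (Fin (n + 1)) ℝ) (a : ℝ)
    (ha : 0 < a) (hT : T.PosDef) :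
    ∀ A B : Finset (Fin n), A ⊆ B → ∀ v ∉ B,
      Real.log (T + a⁻¹ • extIndicator (insert v B)).det -
        Real.log (T + a⁻¹ • extIndicator B).det ≤
      Real.log (T + a⁻¹ • extIndicator (insert v A)).det -
        Real.log (T + a⁻¹ • extIndicator A).det := by
  intro A B hAB v hvB
  have hc : 0 ≤ a⁻¹ := inv_nonneg.mpr ha.le
  have hM (X : Finset (Fin n)) : (T + a⁻¹ • extIndicator X).PosDef :=
    hT.add_posSemidef ((extIndicator_posSemidef X).smul hc)
  have hgain (X : Finset (Fin n)) (hvX : v ∉ X) :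
      Real.log (T + a⁻¹ • extIndicator (insert v X)).det -
          Real.log (T + a⁻¹ • extIndicator X).det =
        Real.log (1 + a⁻¹ * (T + a⁻¹ • extIndicator X)⁻¹ v.castSucc v.castSucc) := by
    rw [← (hM X).log_det_add_single_sub_log_det v.castSucc hc, extIndicator_insert hvX,
      smul_add, smul_single, smul_eq_mul, mul_one, add_assoc]
  rw [hgain B hvB, hgain A fun hvA => hvB (hAB hvA)]
  have hMAB : ((T + a⁻¹ • extIndicator B) - (T + a⁻¹ • extIndicator A)).PosSemidef := by
    simpa [smul_sub] using (extIndicator_sub_posSemidef hAB).smul hc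
  have hle := (hM A).inv_apply_le hMAB v.castSucc
  have hpos : 0 < (T + a⁻¹ • extIndicator B)⁻¹ v.castSucc v.castSucc := (hM B).inv.diag_pos
  gcongr
end

section
/- Let Σ be an n×n positive definite matrix written as Σ = a I + S with a > 0 and S positive definite. Then for any vector θ and any subset A ⊆ {1,…,n}, the signal-to-noise ratio satisfies θ_Aᵀ Σ_A⁻¹ θ_A = θᵀ S⁻¹ θ − θᵀ S⁻¹ [S⁻¹ + a⁻¹ diag(1_A)]⁻¹ S⁻¹ θ, where θ_A = Φ_A θ and Σ_A = Φ_A Σ Φ_Aᵀ with Φ_A the selection matrix of rows of the identity indexed by A. -/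
/-!
With `Φ` the selection matrix of `A` one has `diag(1_A) = Φᵀ Φ` and `Σ_A = a I + Φ S Φᵀ`.
The Woodbury identity for `S⁻¹ + Φᵀ (a⁻¹ I) Φ`, conjugated by `S⁻¹`, therefore reads
`S⁻¹ [S⁻¹ + a⁻¹ diag(1_A)]⁻¹ S⁻¹ = S⁻¹ - Φᵀ Σ_A⁻¹ Φ`, and the quadratic form of `Φᵀ Σ_A⁻¹ Φ`
at `θ` is `θ_Aᵀ Σ_A⁻¹ θ_A`.
-/

open Matrix

theorem Matrix.inv_mul_inv_add_mul_mul_inv_mul_inv_eq_sub {n m α : Type*} [Fintype n]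
    [DecidableEq n] [Fintype m] [DecidableEq m] [CommRing α] {S : Matrix n n α}
    {U : Matrix n m α} {C : Matrix m m α} {V : Matrix m n α}
    (hS : IsUnit S) (hC : IsUnit C) (hSC : IsUnit (C⁻¹ + V * S * U)) :
    S⁻¹ * (S⁻¹ + U * C * V)⁻¹ * S⁻¹ = S⁻¹ - U * (C⁻¹ + V * S * U)⁻¹ * V := by
  have hdet : IsUnit S.det := (isUnit_iff_isUnit_det S).mp hS
  have hSinv : IsUnit S⁻¹ := (isUnit_iff_isUnit_det _).mpr (isUnit_nonsing_inv_det S hdet)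
  rw [add_mul_mul_inv_eq_sub _ _ _ _ hSinv hC (by rwa [nonsing_inv_nonsing_inv S hdet]),
    nonsing_inv_nonsing_inv S hdet]
  simp only [Matrix.mul_sub, Matrix.sub_mul, ← Matrix.mul_assoc, nonsing_inv_mul S hdet,
    Matrix.one_mul]
  simp only [Matrix.mul_assoc, mul_nonsing_inv S hdet, Matrix.mul_one]

section SelectionMatrix

variable {n o : Type*} (R : Type*) [DecidableEq n] [Semiring R]

def selectionMatrix (A : Finset n) : Matrix A n R :=
  (1 : Matrix n n R).submatrix Subtype.val id

variable {R} (A : Finset n)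

theorem selectionMatrix_transpose_mul_self :
    (selectionMatrix R A)ᵀ * selectionMatrix R A = diagonal fun i => if i ∈ A then 1 else 0 := by
  ext i j
  simp only [selectionMatrix, transpose_apply, submatrix_apply, id, mul_apply, one_apply]
  rw [Finset.sum_coe_sort A fun k => (if k = i then (1 : R) else 0) * if k = j then 1 else 0]
  rcases eq_or_ne i j with rfl | hij
  · simp
  · simp [hij, hij.symm]

variable [Fintype n]

theorem selectionMatrix_mul (M : Matrix n o R) :
    selectionMatrix R A * M = M.submatrix Subtype.val id := by
  ext i j
  simp [selectionMatrix, mul_apply, one_apply]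

theorem mul_selectionMatrix_transpose (M : Matrix o n R) :
    M * (selectionMatrix R A)ᵀ = M.submatrix id Subtype.val := by
  ext i j
  simp [selectionMatrix, mul_apply, one_apply]

theorem selectionMatrix_mulVec (v : n → R) : selectionMatrix R A *ᵥ v = fun i : A => v i := by
  ext i
  simp [selectionMatrix, mulVec, dotProduct, one_apply]

end SelectionMatrix

theorem snr_schur_identity {n : ℕ} (S Sig : Matrix (Fin n) (Fin n) ℝ) (a : ℝ)
    (ha : 0 < a) (hS : S.PosDef) (hSig : Sig = a • (1 : Matrix (Fin n) (Fin n) ℝ) + S)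
    (θ : Fin n → ℝ) (A : Finset (Fin n)) :
    (fun i : {x // x ∈ A} => θ i.1) ⬝ᵥ
        ((Sig.submatrix (Subtype.val : {x // x ∈ A} → Fin n) Subtype.val)⁻¹ *ᵥ
          fun i : {x // x ∈ A} => θ i.1) =
      θ ⬝ᵥ (S⁻¹ *ᵥ θ) -
        θ ⬝ᵥ ((S⁻¹ *
          (S⁻¹ + a⁻¹ • Matrix.diagonal (fun i => if i ∈ A then (1 : ℝ) else 0))⁻¹ * S⁻¹) *ᵥ θ) := by
  set Φ := selectionMatrix ℝ A
  set SigA : Matrix A A ℝ := Sig.submatrix Subtype.val Subtype.val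
  have hscalar : a⁻¹ • (1 : Matrix A A ℝ) * a • 1 = 1 := by
    rw [smul_mul_smul, mul_one, inv_mul_cancel₀ ha.ne', one_smul]
  have hSigA : SigA = (a⁻¹ • (1 : Matrix A A ℝ))⁻¹ + Φ * S * Φᵀ := by
    rw [inv_eq_right_inv hscalar, selectionMatrix_mul, mul_selectionMatrix_transpose]
    ext i j
    simp [SigA, hSig, one_apply]
  have hSig_posDef : Sig.PosDef := hSig ▸ (PosDef.one.smul ha).add hS
  have hSigA_posDef : SigA.PosDef := hSig_posDef.submatrix Subtype.val_injective
  have hdiag : a⁻¹ • diagonal (fun i => if i ∈ A then (1 : ℝ) else 0) =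
      Φᵀ * (a⁻¹ • (1 : Matrix A A ℝ)) * Φ := by
    rw [← selectionMatrix_transpose_mul_self, Matrix.mul_smul, Matrix.mul_one, Matrix.smul_mul]
  have hconj : S⁻¹ * (S⁻¹ + a⁻¹ • diagonal (fun i => if i ∈ A then (1 : ℝ) else 0))⁻¹ * S⁻¹ =
      S⁻¹ - Φᵀ * SigA⁻¹ * Φ := by
    rw [hdiag, inv_mul_inv_add_mul_mul_inv_mul_inv_eq_sub hS.isUnit (.of_mul_eq_one _ hscalar)
      (hSigA ▸ hSigA_posDef.isUnit), ← hSigA]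
  rw [hconj, sub_mulVec, dotProduct_sub, sub_sub_cancel, ← selectionMatrix_mulVec,
    ← mulVec_mulVec, ← mulVec_mulVec, dotProduct_mulVec θ, vecMul_transpose]
end

section
/- Let f: 2^V → ℝ be a normalized (f(∅)=0), non-decreasing, ε-submodular set function on a finite ground set V, i.e., for all A ⊆ B ⊂ V and v ∉ B: f(A∪{v}) − f(A) ≥ f(B∪{v}) − f(B) − ε. Let G_K be the set of K elements chosen by the greedy algorithm (at each step adding the element with maximal gain). Then f(G_K) ≥ (1 − 1/e)·max_{|A|=K} f(A) − Kε. -/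
private lemma sum_gain_aux {V : Type*} [DecidableEq V]
    (f : Finset V → ℝ) (ε : ℝ)
    (hsub : ∀ A B : Finset V, A ⊆ B → ∀ v ∉ B,
      f (insert v B) - f B - ε ≤ f (insert v A) - f A) :
    ∀ (S B : Finset V), f (S ∪ B) - f B ≤ ∑ a ∈ S \ B, (f (insert a B) - f B + ε) := by
  intro S
  induction S using Finset.induction_on with
  | empty => intro B; simp
  | @insert a S ha ih =>
    intro B
    by_cases hab : a ∈ B
    · have h1 : insert a S ∪ B = S ∪ B := by
        ext x; simp only [Finset.mem_union, Finset.mem_insert]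
        constructor
        · rintro (⟨rfl | hx⟩ | hx) <;> tauto
        · tauto
      have h2 : insert a S \ B = S \ B := by
        ext x; simp only [Finset.mem_sdiff, Finset.mem_insert]
        constructor
        · rintro ⟨rfl | hx, hxB⟩
          · exact absurd hab hxB
          · exact ⟨hx, hxB⟩
        · tauto
      rw [h1, h2]; exact ih B
    · have h1 : insert a S ∪ B = insert a (S ∪ B) := Finset.insert_union a S B
      have h2 : insert a S \ B = insert a (S \ B) := by
        ext x; simp only [Finset.mem_sdiff, Finset.mem_insert]
        constructor
        · rintro ⟨rfl | hx, hxB⟩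
          · exact Or.inl rfl
          · exact Or.inr ⟨hx, hxB⟩
        · rintro (rfl | ⟨hx, hxB⟩)
          · exact ⟨Or.inl rfl, hab⟩
          · exact ⟨Or.inr hx, hxB⟩
      have haSB : a ∉ S ∪ B := by simp [ha, hab]
      have haSdB : a ∉ S \ B := by simp [ha]
      rw [h1, h2, Finset.sum_insert haSdB]
      have key := hsub B (S ∪ B) Finset.subset_union_right a haSB
      have := ih B
      linarith

theorem greedy_eps_near_optimal {V : Type*} [Fintype V] [DecidableEq V]
    (f : Finset V → ℝ) (ε : ℝ) (hε : 0 ≤ ε)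
    (hnorm : f ∅ = 0)
    (hmono : ∀ A B : Finset V, A ⊆ B → f A ≤ f B)
    (hsub : ∀ A B : Finset V, A ⊆ B → ∀ v ∉ B,
      f (insert v B) - f B - ε ≤ f (insert v A) - f A)
    (K : ℕ) (hK : K ≤ Fintype.card V)
    (G : ℕ → Finset V) (hG0 : G 0 = ∅)
    (hGstep : ∀ k < K, ∃ a ∉ G k, G (k + 1) = insert a (G k) ∧
      ∀ b ∉ G k, f (insert b (G k)) ≤ f (insert a (G k))) :
    ∀ A : Finset V, A.card = K →
      (1 - 1 / Real.exp 1) * f A - (K : ℝ) * ε ≤ f (G K) := by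
  intro A hA
  rcases Nat.eq_zero_or_pos K with hK0 | hKpos
  · subst hK0
    have : A = ∅ := Finset.card_eq_zero.mp hA
    rw [this, hG0, hnorm]
    simp
  · -- K ≥ 1
    have hKR : (1 : ℝ) ≤ (K : ℝ) := by exact_mod_cast hKpos
    have hfA0 : 0 ≤ f A := hnorm ▸ hmono ∅ A (Finset.empty_subset A)
    -- key step inequality
    have hstep : ∀ k < K, f A - f (G (k+1)) ≤ (1 - 1/(K:ℝ)) * (f A - f (G k)) + ε := by
      intro k hk
      obtain ⟨a, haG, hGsucc, hamax⟩ := hGstep k hk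
      have hgain : 0 ≤ f (G (k+1)) - f (G k) := by
        rw [hGsucc]
        have := hmono (G k) (insert a (G k)) (Finset.subset_insert a (G k))
        linarith
      have h1 : f A ≤ f (A ∪ G k) := hmono A _ Finset.subset_union_left
      have h2 := sum_gain_aux f ε hsub A (G k)
      have h3 : ∑ b ∈ A \ G k, (f (insert b (G k)) - f (G k) + ε)
          ≤ ∑ _b ∈ A \ G k, (f (G (k+1)) - f (G k) + ε) := by
        apply Finset.sum_le_sum
        intro b hb
        have hbG : b ∉ G k := (Finset.mem_sdiff.mp hb).2
        have := hamax b hbG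
        rw [hGsucc]
        linarith
      have h4 : ∑ _b ∈ A \ G k, (f (G (k+1)) - f (G k) + ε)
          = ((A \ G k).card : ℝ) * (f (G (k+1)) - f (G k) + ε) := by
        rw [Finset.sum_const, nsmul_eq_mul]
      have hcard : ((A \ G k).card : ℝ) ≤ (K : ℝ) := by
        have : (A \ G k).card ≤ A.card := Finset.card_le_card (Finset.sdiff_subset)
        exact_mod_cast hA ▸ this
      have h5 : ((A \ G k).card : ℝ) * (f (G (k+1)) - f (G k) + ε)
          ≤ (K : ℝ) * (f (G (k+1)) - f (G k) + ε) := by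
        apply mul_le_mul_of_nonneg_right hcard
        linarith
      -- so f A - f (G k) ≤ K * (f (G (k+1)) - f (G k) + ε)
      have h6 : f A - f (G k) ≤ (K : ℝ) * (f (G (k+1)) - f (G k) + ε) := by linarith
      have hKne : (K : ℝ) ≠ 0 := by positivity
      have h7 : (f A - f (G k)) / (K : ℝ) ≤ f (G (k+1)) - f (G k) + ε := by
        rw [div_le_iff₀ (by positivity)]
        linarith [h6]
      have : f A - f (G (k+1)) ≤ (f A - f (G k)) - (f A - f (G k)) / (K:ℝ) + ε := by
        linarith
      calc f A - f (G (k+1)) ≤ (f A - f (G k)) - (f A - f (G k)) / (K:ℝ) + ε := this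
        _ = (1 - 1/(K:ℝ)) * (f A - f (G k)) + ε := by field_simp
    -- induction
    have hind : ∀ k ≤ K, f A - f (G k) ≤ (1 - 1/(K:ℝ))^k * f A + (k : ℝ) * ε := by
      intro k
      induction k with
      | zero => intro _; rw [hG0, hnorm]; simp
      | succ n ih =>
        intro hn
        have hnK : n < K := hn
        have ihh := ih (Nat.le_of_lt hnK)
        have hstepn := hstep n hnK
        have hc : (0:ℝ) ≤ 1 - 1/(K:ℝ) := by
          have : 1/(K:ℝ) ≤ 1 := by
            rw [div_le_one (by positivity)]; exact hKR
          linarith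
        have hmul : (1 - 1/(K:ℝ)) * (f A - f (G n))
            ≤ (1 - 1/(K:ℝ)) * ((1 - 1/(K:ℝ))^n * f A + (n:ℝ) * ε) :=
          mul_le_mul_of_nonneg_left ihh hc
        have hle1 : (1 - 1/(K:ℝ)) ≤ 1 := by
          have : (0:ℝ) < 1/(K:ℝ) := by positivity
          linarith
        have hne : (0:ℝ) ≤ (n:ℝ) * ε := by positivity
        have : (1 - 1/(K:ℝ)) * ((1 - 1/(K:ℝ))^n * f A + (n:ℝ) * ε)
            ≤ (1 - 1/(K:ℝ))^(n+1) * f A + (n:ℝ) * ε := by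
          have h1 : (1 - 1/(K:ℝ)) * ((n:ℝ) * ε) ≤ (n:ℝ) * ε := by
            nlinarith
          have h2 : (1 - 1/(K:ℝ)) * ((1 - 1/(K:ℝ))^n * f A) = (1 - 1/(K:ℝ))^(n+1) * f A := by
            ring
          nlinarith
        push_cast
        linarith
    have hfinal := hind K le_rfl
    -- (1 - 1/K)^K ≤ 1 / exp 1
    have hc : (0:ℝ) ≤ 1 - 1/(K:ℝ) := by
      have : 1/(K:ℝ) ≤ 1 := by rw [div_le_one (by positivity)]; exact hKR
      linarith
    have hexp : (1 - 1/(K:ℝ)) ≤ Real.exp (-(1/(K:ℝ))) := by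
      have := Real.add_one_le_exp (-(1/(K:ℝ)))
      linarith
    have hpow : (1 - 1/(K:ℝ))^K ≤ (Real.exp (-(1/(K:ℝ))))^K :=
      pow_le_pow_left₀ hc hexp K
    have hexppow : (Real.exp (-(1/(K:ℝ))))^K = Real.exp (-(1:ℝ)) := by
      rw [← Real.exp_nat_mul]
      congr 1
      field_simp
    have hKe : (1 - 1/(K:ℝ))^K ≤ 1 / Real.exp 1 := by
      rw [hexppow] at hpow
      rwa [Real.exp_neg, inv_eq_one_div] at hpow
    have hmul2 : (1 - 1/(K:ℝ))^K * f A ≤ (1 / Real.exp 1) * f A :=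
      mul_le_mul_of_nonneg_right hKe hfA0
    linarith
end

section
/- Let f: 2^V → ℝ be a normalized, non-decreasing, submodular set function on a finite ground set V, and let G_K be the output of the greedy algorithm after K steps. Then f(G_K) ≥ (1 − 1/e)·max_{|A|=K} f(A). -/
lemma greedy_tele {V : Type*} [DecidableEq V]
    (f : Finset V → ℝ)
    (hmono : ∀ A B : Finset V, A ⊆ B → f A ≤ f B)
    (hsub : ∀ A B : Finset V, A ⊆ B → ∀ v ∉ B,
      f (insert v B) - f B ≤ f (insert v A) - f A)
    (A S : Finset V) :
    f (S ∪ A) - f S ≤ ∑ a ∈ A, (f (insert a S) - f S) := by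
  classical
  induction A using Finset.induction_on with
  | empty => simp
  | @insert a A' ha ih =>
    rw [Finset.sum_insert ha]
    have hu : S ∪ insert a A' = insert a (S ∪ A') := by
      ext x; simp [or_comm, or_left_comm]
    rw [hu]
    have h1 : f (insert a (S ∪ A')) - f (S ∪ A') ≤ f (insert a S) - f S := by
      by_cases hm : a ∈ S ∪ A'
      · rw [Finset.insert_eq_self.mpr hm]
        have := hmono S (insert a S) (Finset.subset_insert _ _)
        linarith
      · exact hsub S (S ∪ A') Finset.subset_union_left a hm
    linarith

theorem greedy_near_optimal {V : Type*} [Fintype V] [DecidableEq V]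
    (f : Finset V → ℝ)
    (hnorm : f ∅ = 0)
    (hmono : ∀ A B : Finset V, A ⊆ B → f A ≤ f B)
    (hsub : ∀ A B : Finset V, A ⊆ B → ∀ v ∉ B,
      f (insert v B) - f B ≤ f (insert v A) - f A)
    (K : ℕ) (hK : K ≤ Fintype.card V)
    (G : ℕ → Finset V) (hG0 : G 0 = ∅)
    (hGstep : ∀ k < K, ∃ a ∉ G k, G (k + 1) = insert a (G k) ∧
      ∀ b ∉ G k, f (insert b (G k)) ≤ f (insert a (G k))) :
    ∀ A : Finset V, A.card = K →
      (1 - 1 / Real.exp 1) * f A ≤ f (G K) := by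
  intro A hA
  rcases Nat.eq_zero_or_pos K with hK0 | hKpos
  · subst hK0
    have : A = ∅ := Finset.card_eq_zero.mp hA
    rw [this, hG0, hnorm]
    simp
  have hKR : (0:ℝ) < (K:ℝ) := by exact_mod_cast hKpos
  have hfA0 : 0 ≤ f A := by
    have := hmono ∅ A (Finset.empty_subset A); linarith [hnorm ▸ this]
  -- per-step inequality
  have step : ∀ k < K, f A - f (G (k+1)) ≤ (1 - 1/(K:ℝ)) * (f A - f (G k)) := by
    intro k hk
    obtain ⟨a, ha, hins, hmax⟩ := hGstep k hk
    have hgain : f (G k) ≤ f (G (k+1)) := by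
      rw [hins]; exact hmono _ _ (Finset.subset_insert _ _)
    have hterm : ∀ x ∈ A, f (insert x (G k)) - f (G k) ≤ f (G (k+1)) - f (G k) := by
      intro x _
      by_cases hx : x ∈ G k
      · rw [Finset.insert_eq_self.mpr hx]; linarith
      · have := hmax x hx
        rw [hins]; linarith
    have hsum : ∑ x ∈ A, (f (insert x (G k)) - f (G k)) ≤
        (K:ℝ) * (f (G (k+1)) - f (G k)) := by
      calc ∑ x ∈ A, (f (insert x (G k)) - f (G k))
          ≤ ∑ _x ∈ A, (f (G (k+1)) - f (G k)) := Finset.sum_le_sum hterm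
        _ = (A.card : ℝ) * (f (G (k+1)) - f (G k)) := by
            rw [Finset.sum_const, nsmul_eq_mul]
        _ = (K:ℝ) * (f (G (k+1)) - f (G k)) := by rw [hA]
    have hmA : f A ≤ f (G k ∪ A) := hmono _ _ Finset.subset_union_right
    have htele := greedy_tele f hmono hsub A (G k)
    have key : f A ≤ f (G k) + (K:ℝ) * (f (G (k+1)) - f (G k)) := by linarith
    have hdiv : (f A - f (G k)) / (K:ℝ) ≤ f (G (k+1)) - f (G k) := by
      rw [div_le_iff₀ hKR]; nlinarith
    have : (1 - 1/(K:ℝ)) * (f A - f (G k))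
        = (f A - f (G k)) - (f A - f (G k)) / (K:ℝ) := by ring
    linarith
  have hbase : 0 ≤ 1 - 1/(K:ℝ) := by
    have : 1/(K:ℝ) ≤ 1 := by
      rw [div_le_one hKR]; exact_mod_cast hKpos
    linarith
  -- geometric decay
  have bound : ∀ k, k ≤ K → f A - f (G k) ≤ (1 - 1/(K:ℝ))^k * f A := by
    intro k
    induction k with
    | zero => intro _; rw [hG0, hnorm]; simp
    | succ k ih =>
      intro hk1
      have hk : k < K := hk1
      have h1 := step k hk
      have h2 := ih (le_of_lt hk)
      calc f A - f (G (k+1)) ≤ (1 - 1/(K:ℝ)) * (f A - f (G k)) := h1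
        _ ≤ (1 - 1/(K:ℝ)) * ((1 - 1/(K:ℝ))^k * f A) :=
            mul_le_mul_of_nonneg_left h2 hbase
        _ = (1 - 1/(K:ℝ))^(k+1) * f A := by ring
  have hB := bound K le_rfl
  -- (1 - 1/K)^K ≤ exp (-1)
  have hexp1 : 1 - 1/(K:ℝ) ≤ Real.exp (-(1/(K:ℝ))) := by
    have := Real.add_one_le_exp (-(1/(K:ℝ)))
    linarith
  have hpow : (1 - 1/(K:ℝ))^K ≤ Real.exp (-1) := by
    calc (1 - 1/(K:ℝ))^K ≤ (Real.exp (-(1/(K:ℝ))))^K :=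
          pow_le_pow_left₀ hbase hexp1 K
      _ = Real.exp ((K:ℝ) * (-(1/(K:ℝ)))) := by
          rw [← Real.exp_nat_mul]
      _ = Real.exp (-1) := by
          congr 1
          field_simp
  have hfinal : (1 - 1/(K:ℝ))^K * f A ≤ Real.exp (-1) * f A :=
    mul_le_mul_of_nonneg_right hpow hfA0
  have hneg : Real.exp (-1) = 1 / Real.exp 1 := by
    rw [Real.exp_neg]; exact (one_div _).symm
  rw [hneg] at hfinal
  linarith
end

section
/- Every set function f: 2^V → ℝ on a finite ground set V can be expressed as a difference f = g − h of two submodular set functions g, h: 2^V → ℝ. -/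
/-- A set function on a finite ground set is submodular (diminishing returns). -/
def IsSubmodular {V : Type*} [DecidableEq V] (f : Finset V → ℝ) : Prop :=
  ∀ A B : Finset V, A ⊆ B → ∀ v ∉ B, f (insert v B) - f B ≤ f (insert v A) - f A

theorem diff_of_submodular {V : Type*} [Fintype V] [DecidableEq V] (f : Finset V → ℝ) :
    ∃ g h : Finset V → ℝ, IsSubmodular g ∧ IsSubmodular h ∧ ∀ A, f A = g A - h A := by
  classical
  set n : ℝ := (Fintype.card V : ℝ) with hn
  obtain ⟨M, hM⟩ : ∃ M : ℝ, ∀ A : Finset V, |f A| ≤ M :=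
    ⟨Finset.univ.sup' ⟨∅, Finset.mem_univ ∅⟩ (fun A => |f A|),
      fun A => Finset.le_sup' (fun A => |f A|) (Finset.mem_univ A)⟩
  have hM0 : 0 ≤ M := le_trans (abs_nonneg _) (hM ∅)
  set c : ℝ := 2 * M with hc
  set φ : Finset V → ℝ := fun A => c * ((A.card : ℝ) * (2 * n - (A.card : ℝ))) with hφ
  refine ⟨fun A => f A + φ A, φ, ?_, ?_, fun A => by ring⟩
  · intro A B hAB v hvB
    have hvA : v ∉ A := fun h => hvB (hAB h)
    have hcB : ((insert v B).card : ℝ) = (B.card : ℝ) + 1 := by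
      rw [Finset.card_insert_of_notMem hvB]; push_cast; ring
    have hcA : ((insert v A).card : ℝ) = (A.card : ℝ) + 1 := by
      rw [Finset.card_insert_of_notMem hvA]; push_cast; ring
    simp only [hφ, hcB, hcA]
    by_cases hE : A = B
    · subst hE; exact le_refl _
    · have hlt : A.card + 1 ≤ B.card :=
        Finset.card_lt_card (ssubset_of_subset_of_ne hAB hE)
      have hab : (A.card : ℝ) + 1 ≤ (B.card : ℝ) := by exact_mod_cast hlt
      have h1 := abs_le.mp (hM (insert v B))
      have h2 := abs_le.mp (hM B)
      have h3 := abs_le.mp (hM (insert v A))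
      have h4 := abs_le.mp (hM A)
      nlinarith [h1.1, h1.2, h2.1, h2.2, h3.1, h3.2, h4.1, h4.2]
  · intro A B hAB v hvB
    have hvA : v ∉ A := fun h => hvB (hAB h)
    have hcB : ((insert v B).card : ℝ) = (B.card : ℝ) + 1 := by
      rw [Finset.card_insert_of_notMem hvB]; push_cast; ring
    have hcA : ((insert v A).card : ℝ) = (A.card : ℝ) + 1 := by
      rw [Finset.card_insert_of_notMem hvA]; push_cast; ring
    have hab : (A.card : ℝ) ≤ (B.card : ℝ) := by
      exact_mod_cast Finset.card_le_card hAB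
    simp only [hφ, hcB, hcA]
    nlinarith
end

section
/- In the 3-sensor example (θ = all-ones, Σ as above with ρ ∈ [0,1)), greedy maximization of s starting from ∅ first selects sensor 3 (since s({3}) = 1 ≥ 1 − ρ² = s({1}) = s({2})), and its final 2-element set A_G satisfies s(A_G) = 2 − ρ², while the optimal 2-element set A* = {1,2} has s(A*) = 2 + 2ρ; hence the limit as ρ → 1⁻ of s(A_G)/s(A*) equals 1/4. -/
open Matrix Filter

/-- Covariance matrix of the 3-sensor example. -/
noncomputable def sigEx (ρ : ℝ) : Matrix (Fin 3) (Fin 3) ℝ :=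
  !![1 / (1 - ρ ^ 2), -ρ / (1 - ρ ^ 2), 0;
     -ρ / (1 - ρ ^ 2), 1 / (1 - ρ ^ 2), 0;
     0, 0, 1]

/-- SNR set function `s(A) = 1_Aᵀ Σ_A⁻¹ 1_A` of the 3-sensor example. -/
noncomputable def snrEx (ρ : ℝ) (A : Finset (Fin 3)) : ℝ :=
  (fun _ : {x // x ∈ A} => (1 : ℝ)) ⬝ᵥ
    (((sigEx ρ).submatrix (Subtype.val : {x // x ∈ A} → Fin 3) Subtype.val)⁻¹ *ᵥ
      fun _ : {x // x ∈ A} => (1 : ℝ))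

lemma snr_eq (ρ : ℝ) (A : Finset (Fin 3)) (N : Matrix (Fin 3) (Fin 3) ℝ)
    (h : ∀ i ∈ A, ∀ j ∈ A, ∑ k ∈ A, sigEx ρ i k * N k j = if i = j then 1 else 0) :
    snrEx ρ A = ∑ i ∈ A, ∑ j ∈ A, N i j := by
  have hinv : (sigEx ρ).submatrix (Subtype.val : {x // x ∈ A} → Fin 3) Subtype.val *
      N.submatrix (Subtype.val : {x // x ∈ A} → Fin 3) Subtype.val
      = (1 : Matrix {x // x ∈ A} {x // x ∈ A} ℝ) := by
    ext ⟨i, hi⟩ ⟨j, hj⟩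
    rw [Matrix.mul_apply]
    simp only [Matrix.submatrix_apply]
    rw [Finset.sum_coe_sort A (fun k => sigEx ρ i k * N k j), h i hi j hj]
    simp [Matrix.one_apply, Subtype.ext_iff]
  unfold snrEx
  rw [Matrix.inv_eq_right_inv hinv]
  simp only [dotProduct, Matrix.mulVec, Matrix.submatrix_apply, one_mul, mul_one]
  rw [← Finset.sum_coe_sort A (fun i => ∑ j ∈ A, N i j)]
  congr 1; ext i
  rw [← Finset.sum_coe_sort A (fun j => N i.val j)]

lemma hne (ρ : ℝ) (h0 : -1 < ρ) (h1 : ρ < 1) : 1 - ρ ^ 2 ≠ 0 := by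
  have : ρ ^ 2 < 1 := by
    have := abs_lt.mpr ⟨h0, h1⟩
    calc ρ ^ 2 = |ρ| ^ 2 := (sq_abs ρ).symm
    _ < 1 := by nlinarith [abs_nonneg ρ]
  linarith

lemma snr0 (ρ : ℝ) (h0 : -1 < ρ) (h1 : ρ < 1) : snrEx ρ {0} = 1 - ρ ^ 2 := by
  have hρ := hne ρ h0 h1
  rw [snr_eq ρ {0} !![1 - ρ ^ 2,0,0;0,0,0;0,0,0]]
  · simp
  · intro i hi j hj
    fin_cases hi <;> fin_cases hj <;> simp [sigEx] <;> field_simp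

lemma snr1 (ρ : ℝ) (h0 : -1 < ρ) (h1 : ρ < 1) : snrEx ρ {1} = 1 - ρ ^ 2 := by
  have hρ := hne ρ h0 h1
  rw [snr_eq ρ {1} !![0,0,0;0,1 - ρ ^ 2,0;0,0,0]]
  · simp
  · intro i hi j hj
    fin_cases hi <;> fin_cases hj <;> simp [sigEx] <;> field_simp

lemma snr2 (ρ : ℝ) : snrEx ρ {2} = 1 := by
  rw [snr_eq ρ {2} !![0,0,0;0,0,0;0,0,1]]
  · simp
  · intro i hi j hj
    fin_cases hi <;> fin_cases hj <;> simp [sigEx]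

lemma snr20 (ρ : ℝ) (h0 : -1 < ρ) (h1 : ρ < 1) : snrEx ρ {2, 0} = 2 - ρ ^ 2 := by
  have hρ := hne ρ h0 h1
  rw [snr_eq ρ {2, 0} !![1 - ρ ^ 2,0,0;0,0,0;0,0,1]]
  · simp [Finset.sum_pair (show (2:Fin 3) ≠ 0 from by decide), Matrix.vecHead, Matrix.vecTail]
    ring
  · intro i hi j hj
    fin_cases hi <;> fin_cases hj <;>
      simp [sigEx, Finset.sum_pair (show (2:Fin 3) ≠ 0 from by decide),
        Matrix.vecHead, Matrix.vecTail] <;>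
      (try field_simp)

lemma snr21 (ρ : ℝ) (h0 : -1 < ρ) (h1 : ρ < 1) : snrEx ρ {2, 1} = 2 - ρ ^ 2 := by
  have hρ := hne ρ h0 h1
  rw [snr_eq ρ {2, 1} !![0,0,0;0,1 - ρ ^ 2,0;0,0,1]]
  · simp [Finset.sum_pair (show (2:Fin 3) ≠ 1 from by decide), Matrix.vecHead, Matrix.vecTail]
    ring
  · intro i hi j hj
    fin_cases hi <;> fin_cases hj <;>
      simp [sigEx, Finset.sum_pair (show (2:Fin 3) ≠ 1 from by decide),
        Matrix.vecHead, Matrix.vecTail] <;>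
      (try field_simp)

lemma snr01 (ρ : ℝ) (h0 : -1 < ρ) (h1 : ρ < 1) : snrEx ρ {0, 1} = 2 + 2 * ρ := by
  have hρ := hne ρ h0 h1
  rw [snr_eq ρ {0, 1} !![1,ρ,0;ρ,1,0;0,0,0]]
  · simp [Finset.sum_pair (show (0:Fin 3) ≠ 1 from by decide), Matrix.vecHead, Matrix.vecTail]
    ring
  · intro i hi j hj
    fin_cases hi <;> fin_cases hj <;>
      simp [sigEx, Finset.sum_pair (show (0:Fin 3) ≠ 1 from by decide),
        Matrix.vecHead, Matrix.vecTail] <;>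
      (try field_simp) <;> (try ring)

theorem three_sensor_greedy_fails :
    (∀ ρ : ℝ, 0 ≤ ρ → ρ < 1 →
      snrEx ρ {0} ≤ snrEx ρ {2} ∧ snrEx ρ {1} ≤ snrEx ρ {2} ∧
      snrEx ρ {2, 0} = 2 - ρ ^ 2 ∧ snrEx ρ {2, 1} = 2 - ρ ^ 2 ∧
      snrEx ρ {0, 1} = 2 + 2 * ρ) ∧
    Tendsto (fun ρ : ℝ => snrEx ρ {2, 0} / snrEx ρ {0, 1})
      (nhdsWithin 1 (Set.Iio 1)) (nhds (1 / 4)) := by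
  constructor
  · intro ρ h0 h1
    have h0' : -1 < ρ := by linarith
    rw [snr0 ρ h0' h1, snr1 ρ h0' h1, snr2 ρ, snr20 ρ h0' h1, snr21 ρ h0' h1,
      snr01 ρ h0' h1]
    refine ⟨by nlinarith, by nlinarith, rfl, rfl, rfl⟩
  · have hev : ∀ᶠ ρ in nhdsWithin (1:ℝ) (Set.Iio 1),
        snrEx ρ {2, 0} / snrEx ρ {0, 1} = (2 - ρ ^ 2) / (2 + 2 * ρ) := by
      filter_upwards [Ioo_mem_nhdsLT_of_mem
        (show (1:ℝ) ∈ Set.Ioc (0:ℝ) 1 by constructor <;> norm_num)] with ρ hρ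
      obtain ⟨h0, h1⟩ := hρ
      rw [snr20 ρ (by linarith) h1, snr01 ρ (by linarith) h1]
    refine Tendsto.congr' (EventuallyEq.symm hev) ?_
    have : Tendsto (fun ρ : ℝ => (2 - ρ ^ 2) / (2 + 2 * ρ)) (nhds 1) (nhds (1 / 4)) := by
      have h4 : ((2:ℝ) - 1 ^ 2) / (2 + 2 * 1) = 1 / 4 := by norm_num
      rw [← h4]
      apply Tendsto.div
      · exact (continuous_const.sub (continuous_pow 2)).tendsto 1
      · exact (continuous_const.add (continuous_const.mul continuous_id)).tendsto 1
      · norm_num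
    exact this.mono_left nhdsWithin_le_nhds
end

section
/- For Gaussian distributions N(θ₀, Σ₀) and N(θ₁, Σ₁) restricted to a subset A (with Σ_{i,A} the principal submatrices and common means θ₀ = θ₁), the Bhattacharyya distance B(A) = ½ log det(Σ_A) − ¼(log det(Σ₀,A) + log det(Σ₁,A)), with Σ_A = ½(Σ₀,A + Σ₁,A), is a difference g(A) − h(A) of two submodular set functions, where g(A) = ½ log det(½(Σ₀,A + Σ₁,A)) and h(A) = ¼(log det(Σ₀,A) + log det(Σ₁,A)); moreover B(A) ≥ 0 for all A. -/
/-!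
Adding `v ∉ A` to `A` multiplies `det M_A` by the Schur complement
`s(A, v) = M_vv - M_vA M_A⁻¹ M_Av`, which is the minimum of `zᵀ M z` over the vectors with
`z_v = 1` supported on `A ∪ {v}`. Enlarging `A` enlarges the feasible set, so `s(A, v)` decreases,
which is the diminishing-returns property of `A ↦ log det M_A`.

For `B ≥ 0`, write `X = R²` with `R = X^{1/2}` and `Y = R N R`. Then
`det X det Y / det (½(X + Y))² = ∏ μᵢ / ((1 + μᵢ) / 2)² ≤ 1` over the eigenvalues `μᵢ > 0` of `N`,
by AM–GM for each eigenvalue.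
-/

open Matrix

/-- Log-determinant of the principal submatrix indexed by `A`. -/
noncomputable def ldSub {n : ℕ} (M : Matrix (Fin n) (Fin n) ℝ) (A : Finset (Fin n)) : ℝ :=
  Real.log (M.submatrix (Subtype.val : {x // x ∈ A} → Fin n) Subtype.val).det

/-- Bhattacharyya distance restricted to subset `A` (common-means Gaussian case). -/
noncomputable def bhattB {n : ℕ} (S0 S1 : Matrix (Fin n) (Fin n) ℝ) (A : Finset (Fin n)) : ℝ :=
  (1 / 2) * ldSub ((1 / 2 : ℝ) • (S0 + S1)) A - (1 / 4) * (ldSub S0 A + ldSub S1 A)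

namespace IsSubmodular

variable {V : Type*} [DecidableEq V] {f g : Finset V → ℝ}

lemma const_mul (hf : IsSubmodular f) {c : ℝ} (hc : 0 ≤ c) : IsSubmodular fun A => c * f A :=
  fun A B hAB v hv => by
    have := mul_le_mul_of_nonneg_left (hf A B hAB v hv) hc
    linarith

lemma add (hf : IsSubmodular f) (hg : IsSubmodular g) : IsSubmodular fun A => f A + g A :=
  fun A B hAB v hv => by linarith [hf A B hAB v hv, hg A B hAB v hv]

end IsSubmodular

namespace Matrix

lemma dotProduct_mulVec_submatrix_comp {ι κ R : Type*} [Fintype ι] [Fintype κ]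
    [NonUnitalNonAssocSemiring R] (M : Matrix ι ι R) {e : κ → ι} (he : Function.Injective e)
    {z : ι → R} (hz : ∀ j ∉ Set.range e, z j = 0) :
    (z ∘ e) ⬝ᵥ (M.submatrix e e *ᵥ (z ∘ e)) = z ⬝ᵥ (M *ᵥ z) := by
  have hsum (g : ι → R) (hg : ∀ j ∉ Set.range e, g j = 0) : ∑ k, g (e k) = ∑ j, g j :=
    Fintype.sum_of_injective e he _ _ hg fun _ => rfl
  simp only [dotProduct, mulVec, submatrix_apply, Function.comp_apply]
  rw [hsum (fun j => z j * ∑ k, M j (e k) * z (e k)) fun j hj => by simp [hz j hj]]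
  exact Fintype.sum_congr _ _ fun j => by
    rw [hsum (fun k => M j k * z k) fun k hk => by simp [hz k hk]]

variable {m : Type*} [Fintype m] [DecidableEq m]

lemma det_fromBlocks_unit (a : ℝ) (b : m → ℝ) {D : Matrix m m ℝ} (hD : IsUnit D.det) :
    (fromBlocks (of fun _ _ => a) (replicateRow Unit b) (replicateCol Unit b) D).det =
      D.det * (a - b ⬝ᵥ (D⁻¹ *ᵥ b)) := by
  have := D.invertibleOfIsUnitDet hD
  rw [det_fromBlocks₂₂, det_unique (A := _ - _), invOf_eq_nonsing_inv, Matrix.mul_assoc,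
    ← replicateCol_mulVec]
  rfl

lemma dotProduct_fromBlocks_unit (a : ℝ) (b : m → ℝ) {D : Matrix m m ℝ} (hD : D.IsHermitian)
    [Invertible D] (y : m → ℝ) :
    Sum.elim 1 y ⬝ᵥ (fromBlocks (of fun _ _ => a) (replicateRow Unit b) (replicateCol Unit b) D *ᵥ
      Sum.elim 1 y) =
      (D⁻¹ *ᵥ b + y) ⬝ᵥ (D *ᵥ (D⁻¹ *ᵥ b + y)) + (a - b ⬝ᵥ (D⁻¹ *ᵥ b)) := by
  have hcol (w : m → ℝ) : replicateCol Unit w *ᵥ 1 = w := by ext; simp [mulVec, dotProduct]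
  have h := schur_complement_eq₂₂ (of fun _ _ => a) (replicateRow Unit b) 1 y hD
  simp only [conjTranspose_replicateRow, star_trivial, ← replicateCol_mulVec, hcol,
    ← replicateRow_vecMul, replicateRow_mulVec_eq_const, ← dotProduct_mulVec] at h
  rw [h]
  congr 1
  simp [mulVec, dotProduct]

lemma IsHermitian.det_one_add {M : Matrix m m ℝ} (hM : M.IsHermitian) :
    (1 + M).det = ∏ i, (1 + hM.eigenvalues i) := by
  set U := hM.eigenvectorUnitary
  have hU : (U : Matrix m m ℝ).det * (star U : Matrix m m ℝ).det = 1 := by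
    rw [← det_mul, mem_unitaryGroup_iff.mp U.2, det_one]
  conv_lhs => rw [hM.spectral_theorem, ← map_one (Unitary.conjStarAlgAut ℝ _ U), ← map_add,
    Unitary.conjStarAlgAut_apply, det_mul, det_mul, mul_right_comm, hU, one_mul,
    ← diagonal_one, diagonal_add, det_diagonal]
  rfl

lemma PosDef.det_le_det_half_one_add_sq {M : Matrix m m ℝ} (hM : M.PosDef) :
    M.det ≤ ((1 / 2 : ℝ) • (1 + M)).det ^ 2 := by
  have hμ := hM.eigenvalues_pos
  rw [det_smul, hM.1.det_one_add, hM.1.det_eq_prod_eigenvalues, ← Finset.card_univ,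
    ← Finset.prod_const, ← Finset.prod_mul_distrib, ← Finset.prod_pow]
  refine Finset.prod_le_prod (fun i _ => (hμ i).le) fun i _ => ?_
  simp only [RCLike.ofReal_real_eq_id, id]
  nlinarith [sq_nonneg (hM.1.eigenvalues i - 1)]

open scoped MatrixOrder in
lemma PosDef.det_mul_det_le_det_half_add_sq {X Y : Matrix m m ℝ} (hX : X.PosDef)
    (hY : Y.PosDef) : X.det * Y.det ≤ ((1 / 2 : ℝ) • (X + Y)).det ^ 2 := by
  set R := CFC.sqrt X
  have hR : R.PosDef := hX.isStrictlyPositive.sqrt.posDef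
  have hRR : R * R = X := CFC.sqrt_mul_sqrt_self X hX.posSemidef.nonneg
  have hRdet : IsUnit R.det := (isUnit_iff_isUnit_det R).mp hR.isUnit
  obtain ⟨N, hN, hYN⟩ : ∃ N : Matrix m m ℝ, N.PosDef ∧ Y = R * N * R := by
    refine ⟨star R⁻¹ * Y * R⁻¹, ?_, ?_⟩
    · exact (IsUnit.posDef_star_left_conjugate_iff (isUnit_nonsing_inv_iff.mpr hR.isUnit)).mpr hY
    · rw [star_eq_conjTranspose, hR.1.inv.eq, Matrix.mul_assoc R,
        nonsing_inv_mul_cancel_right _ _ hRdet, mul_nonsing_inv_cancel_left _ _ hRdet]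
  have hXY : (1 / 2 : ℝ) • (X + Y) = R * ((1 / 2 : ℝ) • (1 + N)) * R := by
    rw [← hRR, hYN, Matrix.mul_smul, Matrix.smul_mul, Matrix.mul_add, Matrix.add_mul,
      Matrix.mul_one]
  rw [hXY, ← hRR, hYN]
  simp only [det_mul]
  have := hN.det_le_det_half_one_add_sq
  have := sq_nonneg (R.det ^ 2)
  nlinarith

lemma PosDef.log_det_add_log_det_le {X Y : Matrix m m ℝ} (hX : X.PosDef) (hY : Y.PosDef) :
    Real.log X.det + Real.log Y.det ≤ 2 * Real.log ((1 / 2 : ℝ) • (X + Y)).det := by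
  rw [← Real.log_mul hX.det_pos.ne' hY.det_pos.ne']
  calc Real.log (X.det * Y.det) ≤ Real.log (((1 / 2 : ℝ) • (X + Y)).det ^ 2) :=
        Real.log_le_log (mul_pos hX.det_pos hY.det_pos) (hX.det_mul_det_le_det_half_add_sq hY)
    _ = 2 * Real.log ((1 / 2 : ℝ) • (X + Y)).det := by rw [Real.log_pow]; norm_num

end Matrix

namespace Finset

variable {ι : Type*} {A : Finset ι} {v : ι}

def insertInclusion (A : Finset ι) (v : ι) : Unit ⊕ A → ι := Sum.elim (fun _ => v) (↑)

lemma insertInclusion_injective (hv : v ∉ A) : Function.Injective (insertInclusion A v) := by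
  rintro (_ | ⟨i, hi⟩) (_ | ⟨j, hj⟩) h <;>
    simp only [insertInclusion, Sum.elim_inl, Sum.elim_inr] at h <;> grind

lemma mem_range_insertInclusion [DecidableEq ι] {j : ι} :
    j ∈ Set.range (insertInclusion A v) ↔ j ∈ insert v A := by
  simp [insertInclusion, eq_comm]

noncomputable def insertInclusionEquiv [DecidableEq ι] (hv : v ∉ A) :
    Unit ⊕ A ≃ {x // x ∈ insert v A} :=
  Equiv.ofBijective (fun s => ⟨insertInclusion A v s, mem_range_insertInclusion.mp ⟨s, rfl⟩⟩)
    ⟨fun _ _ h => insertInclusion_injective hv (congrArg Subtype.val h), fun ⟨_, hj⟩ => by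
      obtain ⟨s, rfl⟩ := mem_range_insertInclusion.mpr hj
      exact ⟨s, rfl⟩⟩

lemma submatrix_insertInclusion {M : Matrix ι ι ℝ} (hM : M.IsHermitian) :
    M.submatrix (insertInclusion A v) (insertInclusion A v) =
      fromBlocks (of fun _ _ => M v v) (replicateRow Unit fun i : A => M v i)
        (replicateCol Unit fun i : A => M v i) (M.submatrix (↑) (↑)) := by
  have hsymm (i : ι) : M i v = M v i := by simpa using hM.apply v i
  ext (_ | i) (_ | j) <;> simp [insertInclusion, hsymm]

end Finset

namespace Matrix

open Finset

variable {ι : Type*} [DecidableEq ι] {M : Matrix ι ι ℝ} {A B : Finset ι} {v : ι}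

/-- The Schur complement of the block `A` in the principal submatrix of `M` on `insert v A`. -/
noncomputable def schurCompl (M : Matrix ι ι ℝ) (A : Finset ι) (v : ι) : ℝ :=
  M v v - (fun i : A => M v i) ⬝ᵥ ((M.submatrix (↑) (↑) : Matrix A A ℝ)⁻¹ *ᵥ fun i : A => M v i)

lemma det_submatrix_insert (hM : M.PosDef) (hv : v ∉ A) :
    (M.submatrix (Subtype.val : {x // x ∈ insert v A} → ι) Subtype.val).det =
      (M.submatrix (Subtype.val : {x // x ∈ A} → ι) Subtype.val).det * schurCompl M A v := by
  rw [← det_submatrix_equiv_self (insertInclusionEquiv hv), submatrix_submatrix]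
  exact (congrArg det (submatrix_insertInclusion hM.1)).trans
    (det_fromBlocks_unit _ _ (hM.submatrix Subtype.val_injective).det_pos.ne'.isUnit)

lemma schurCompl_pos (hM : M.PosDef) (hv : v ∉ A) : 0 < schurCompl M A v := by
  have h := (hM.submatrix (Subtype.val_injective (p := (· ∈ insert v A)))).det_pos
  rw [det_submatrix_insert hM hv] at h
  exact pos_of_mul_pos_right h (hM.submatrix Subtype.val_injective).det_pos.le

variable [Fintype ι]

theorem isLeast_schurCompl (hM : M.PosDef) (hv : v ∉ A) :
    IsLeast ((fun z => z ⬝ᵥ (M *ᵥ z)) '' {z | z v = 1 ∧ ∀ j ∉ insert v A, z j = 0})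
      (schurCompl M A v) := by
  set e := insertInclusion A v
  set D : Matrix {x // x ∈ A} {x // x ∈ A} ℝ := M.submatrix (↑) (↑)
  set b : {x // x ∈ A} → ℝ := fun i => M v i
  have hD : D.PosDef := hM.submatrix Subtype.val_injective
  have := hD.isUnit.invertible
  -- completing the square in the coordinates on `A`
  have hquad (z : ι → ℝ) (hzv : z v = 1) (hz : ∀ j ∉ insert v A, z j = 0) :
      z ⬝ᵥ (M *ᵥ z) = (D⁻¹ *ᵥ b + fun i : {x // x ∈ A} => z i) ⬝ᵥ
        (D *ᵥ (D⁻¹ *ᵥ b + fun i : {x // x ∈ A} => z i)) + schurCompl M A v := by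
    have hze : z ∘ e = Sum.elim (1 : Unit → ℝ) (fun i : {x // x ∈ A} => z i) := by
      ext (_ | i) <;> simp [e, insertInclusion, hzv]
    rw [← dotProduct_mulVec_submatrix_comp M (insertInclusion_injective hv)
      (fun j hj => hz j (mt mem_range_insertInclusion.mpr hj)), hze,
      submatrix_insertInclusion hM.1, dotProduct_fromBlocks_unit _ _ hD.1]
    rfl
  set z₀ := Function.extend e (Sum.elim (1 : Unit → ℝ) (-(D⁻¹ *ᵥ b))) 0
  have hz₀v : z₀ v = 1 := (insertInclusion_injective hv).extend_apply _ _ (Sum.inl ())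
  have hz₀ : ∀ j ∉ insert v A, z₀ j = 0 := fun j hj =>
    Function.extend_apply' _ _ _ fun hj' => hj (mem_range_insertInclusion.mp hj')
  have hz₀A : (fun i : {x // x ∈ A} => z₀ i) = -(D⁻¹ *ᵥ b) :=
    funext fun i => (insertInclusion_injective hv).extend_apply _ _ (Sum.inr i)
  refine ⟨⟨z₀, ⟨hz₀v, hz₀⟩, ?_⟩, ?_⟩
  · simp only [hquad z₀ hz₀v hz₀, hz₀A, add_neg_cancel, mulVec_zero, dotProduct_zero, zero_add]
  · rintro _ ⟨z, ⟨hzv, hz⟩, rfl⟩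
    change _ ≤ z ⬝ᵥ (M *ᵥ z)
    rw [hquad z hzv hz, le_add_iff_nonneg_left]
    simpa using hD.posSemidef.dotProduct_mulVec_nonneg (D⁻¹ *ᵥ b + fun i : {x // x ∈ A} => z i)

lemma schurCompl_le_schurCompl_of_subset (hM : M.PosDef) (hAB : A ⊆ B) (hv : v ∉ B) :
    schurCompl M B v ≤ schurCompl M A v :=
  (isLeast_schurCompl hM fun h => hv (hAB h)).mono (isLeast_schurCompl hM hv) <|
    Set.image_mono fun _ ⟨hzv, hz⟩ =>
      ⟨hzv, fun j hj => hz j fun h => hj (insert_subset_insert v hAB h)⟩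

theorem PosDef.isSubmodular_log_det_submatrix (hM : M.PosDef) :
    IsSubmodular fun A : Finset ι =>
      Real.log (M.submatrix (Subtype.val : {x // x ∈ A} → ι) Subtype.val).det := by
  intro A B hAB v hvB
  have hvA : v ∉ A := fun h => hvB (hAB h)
  have hdet (C : Finset ι) := (hM.submatrix (Subtype.val_injective (p := (· ∈ C)))).det_pos.ne'
  simp only [det_submatrix_insert hM hvA, det_submatrix_insert hM hvB,
    Real.log_mul (hdet _) (schurCompl_pos hM hvA).ne',
    Real.log_mul (hdet _) (schurCompl_pos hM hvB).ne', add_sub_cancel_left]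
  exact Real.log_le_log (schurCompl_pos hM hvB) (schurCompl_le_schurCompl_of_subset hM hAB hvB)

end Matrix

theorem bhattacharyya_DS_decomposition {n : ℕ} (S0 S1 : Matrix (Fin n) (Fin n) ℝ)
    (h0 : S0.PosDef) (h1 : S1.PosDef) :
    IsSubmodular (fun A : Finset (Fin n) => (1 / 2) * ldSub ((1 / 2 : ℝ) • (S0 + S1)) A) ∧
    IsSubmodular (fun A : Finset (Fin n) => (1 / 4) * (ldSub S0 A + ldSub S1 A)) ∧
    (∀ A : Finset (Fin n),
      bhattB S0 S1 A =
        (1 / 2) * ldSub ((1 / 2 : ℝ) • (S0 + S1)) A - (1 / 4) * (ldSub S0 A + ldSub S1 A)) ∧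
    (∀ A : Finset (Fin n), 0 ≤ bhattB S0 S1 A) := by
  have hmid : ((1 / 2 : ℝ) • (S0 + S1)).PosDef := (h0.add h1).smul (by norm_num)
  refine ⟨hmid.isSubmodular_log_det_submatrix.const_mul (by norm_num),
    (h0.isSubmodular_log_det_submatrix.add h1.isSubmodular_log_det_submatrix).const_mul
      (by norm_num), fun A => rfl, fun A => ?_⟩
  have h := (h0.submatrix (Subtype.val_injective (p := (· ∈ A)))).log_det_add_log_det_le
    (h1.submatrix Subtype.val_injective)
  rw [bhattB, ldSub, ldSub, ldSub]
  simp only [submatrix_smul, submatrix_add, Pi.add_apply, Pi.smul_apply]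
  linarith
end
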